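/- arXiv:2512.01079 — 5 statements merged into one kernel-verified Lean document; each statement's English description precedes it below -/
import Mathlib

section
/- Let R be a commutative ring, let A: 0 → A₃ → A₂ → A₁ → R be a complex of finite free R-modules with differentials d₃, d₂, d₁, and suppose A admits the structure of a differential graded commutative algebra extending the ring structure on R (so that in particular d₁(e)f + d₂(f)e = d₂(e·f) for e ∈ A₁, f ∈ A₂, where e·f ∈ A₃, and the product A₁ ⊗ A₂ → A₃ exists satisfying the Leibniz rule). Fix a direct sum decomposition A₃ = C ⊕ L with projection η : A₃ → L. Define δ₄ : C → A₂ as the restriction of d₃ to C, and define δ₃ : A₂ → Hom(A₁, L) ⊕ A₁ by δ₃(f) = (e ↦ η(e·f), d₂(f)). Then δ₃ ∘ δ₄ = 0. -/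
theorem stmt2_general {R : Type*} [CommRing R]
    (A₁ A₂ C L : Type*)
    [AddCommGroup A₁] [Module R A₁]
    [AddCommGroup A₂] [Module R A₂]
    [AddCommGroup C] [Module R C]
    [AddCommGroup L] [Module R L]
    (d₁ : A₁ →ₗ[R] R) (d₂ : A₂ →ₗ[R] A₁) (d₃ : C × L →ₗ[R] A₂)
    (mul12 : A₁ →ₗ[R] A₂ →ₗ[R] C × L)
    -- complex conditions
    (hd32 : ∀ g : C × L, d₂ (d₃ g) = 0)
    -- Leibniz rule for products A₁ · A₁ and A₁ · A₂ and A₁ · A₃ (the latter landing in A₄ = 0)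
    (hLeib13 : ∀ (e : A₁) (g : C × L), mul12 e (d₃ g) = d₁ e • g) :
    -- the differentials of B
    ∀ c : C,
      (∀ e : A₁, ((mul12 e (d₃ (c, 0))).2 : L) = 0) ∧ d₂ (d₃ (c, 0)) = 0 := by
  intro c
  refine ⟨fun e => ?_, hd32 _⟩
  rw [hLeib13, Prod.smul_snd, smul_zero]

theorem stmt2 {R : Type*} [CommRing R]
    (A₁ A₂ C L : Type*)
    [AddCommGroup A₁] [Module R A₁] [Module.Free R A₁] [Module.Finite R A₁]
    [AddCommGroup A₂] [Module R A₂] [Module.Free R A₂] [Module.Finite R A₂]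
    [AddCommGroup C] [Module R C] [Module.Free R C] [Module.Finite R C]
    [AddCommGroup L] [Module R L] [Module.Free R L] [Module.Finite R L]
    (d₁ : A₁ →ₗ[R] R) (d₂ : A₂ →ₗ[R] A₁) (d₃ : C × L →ₗ[R] A₂)
    (mul11 : A₁ →ₗ[R] A₁ →ₗ[R] A₂) (mul12 : A₁ →ₗ[R] A₂ →ₗ[R] C × L)
    -- complex conditions
    (hd21 : ∀ f : A₂, d₁ (d₂ f) = 0)
    (hd32 : ∀ g : C × L, d₂ (d₃ g) = 0)
    -- graded commutativity in degree 1
    (hcomm : ∀ e e' : A₁, mul11 e e' = - mul11 e' e)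
    (hsq : ∀ e : A₁, mul11 e e = 0)
    -- Leibniz rule for products A₁ · A₁ and A₁ · A₂ and A₁ · A₃ (the latter landing in A₄ = 0)
    (hLeib11 : ∀ e e' : A₁, d₂ (mul11 e e') = d₁ e • e' - d₁ e' • e)
    (hLeib12 : ∀ (e : A₁) (f : A₂),
      d₃ (mul12 e f) = d₁ e • f - mul11 e (d₂ f))
    (hLeib13 : ∀ (e : A₁) (g : C × L), mul12 e (d₃ g) = d₁ e • g) :
    -- the differentials of B
    ∀ c : C,
      (∀ e : A₁, ((mul12 e (d₃ (c, 0))).2 : L) = 0) ∧ d₂ (d₃ (c, 0)) = 0 :=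
  stmt2_general A₁ A₂ C L d₁ d₂ d₃ mul12 hd32 hLeib13
end

section
/- Let R be a commutative ring, and let A be a split exact complex 0 → A₃ → A₃ ⊕ M → R ⊕ M → R as above, equipped with the standard DGA multiplication. Given any R-linear map b : ⋀² A₁ → A₃, define a new multiplication by adding d₃(b(e₁ ∧ e₂)) to each product e₁·e₂ of degree-1 elements, and adding b(d₂(f) ∧ e) to each product e·f with e ∈ A₁, f ∈ A₂. Then the new multiplication again makes A a differential graded commutative algebra (graded-commutative, satisfying the Leibniz rule). -/
theorem stmt5_general {R : Type*} [CommRing R] (p : ℕ)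
    (A₃ : Type*) [AddCommGroup A₃] [Module R A₃]
    (d₃ : A₃ →ₗ[R] A₃ × (Fin (p+1) → R))
    (d₂ : A₃ × (Fin (p+1) → R) →ₗ[R] R × (Fin (p+1) → R))
    (d₁ : R × (Fin (p+1) → R) →ₗ[R] R)
    (hd₃ : ∀ a, d₃ a = (a, 0))
    (hd₂ : ∀ x : A₃ × (Fin (p+1) → R), d₂ x = (0, x.2))
    (hd₁ : ∀ x : R × (Fin (p+1) → R), d₁ x = x.1)
    -- the map b : ⋀² A₁ → A₃, as an alternating bilinear map
    (b : (R × (Fin (p+1) → R)) →ₗ[R] (R × (Fin (p+1) → R)) →ₗ[R] A₃)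
    (hb : ∀ x, b x x = 0)
    -- the new multiplication: standard multiplication modified by b
    (mul11 : (R × (Fin (p+1) → R)) → (R × (Fin (p+1) → R)) → A₃ × (Fin (p+1) → R))
    (mul12 : (R × (Fin (p+1) → R)) → (A₃ × (Fin (p+1) → R)) → A₃)
    (hmul11 : ∀ x y, mul11 x y = (0, x.1 • y.2 - y.1 • x.2) + d₃ (b x y))
    (hmul12 : ∀ x f, mul12 x f = x.1 • f.1 + b (d₂ f) x) :
    -- graded commutativity in odd degree
    (∀ x y, mul11 x y = - mul11 y x) ∧ (∀ x, mul11 x x = 0) ∧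
    -- Leibniz rule for degree 1 · degree 1
    (∀ x y, d₂ (mul11 x y) = d₁ x • y - d₁ y • x) ∧
    -- Leibniz rule for degree 1 · degree 2
    (∀ x f, d₃ (mul12 x f) = d₁ x • f - mul11 x (d₂ f)) := by
  have hskew : ∀ x y, b y x = -b x y := fun x y => (LinearMap.IsAlt.neg hb x y).symm
  have hmul11_pair : ∀ x y, mul11 x y = (b x y, x.1 • y.2 - y.1 • x.2) := fun x y => by
    rw [hmul11, hd₃, Prod.mk_add_mk, zero_add, add_zero]
  refine ⟨fun x y => ?_, fun x => ?_, fun x y => ?_, fun x f => ?_⟩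
  · rw [hmul11_pair, hmul11_pair, hskew x y, Prod.neg_mk, neg_neg, neg_sub]
  · rw [hmul11_pair, hb, sub_self, Prod.mk_zero_zero]
  · rw [hmul11_pair, hd₂, hd₁, hd₁]
    ext <;> simp [mul_comm]
  · rw [hmul12, hmul11_pair, hd₃, hd₂, hd₁, hskew x]
    ext <;> simp [sub_eq_add_neg]

theorem stmt5 {R : Type*} [CommRing R] (p : ℕ)
    (A₃ : Type*) [AddCommGroup A₃] [Module R A₃] [Module.Free R A₃] [Module.Finite R A₃]
    (d₃ : A₃ →ₗ[R] A₃ × (Fin (p+1) → R))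
    (d₂ : A₃ × (Fin (p+1) → R) →ₗ[R] R × (Fin (p+1) → R))
    (d₁ : R × (Fin (p+1) → R) →ₗ[R] R)
    (hd₃ : ∀ a, d₃ a = (a, 0))
    (hd₂ : ∀ x : A₃ × (Fin (p+1) → R), d₂ x = (0, x.2))
    (hd₁ : ∀ x : R × (Fin (p+1) → R), d₁ x = x.1)
    -- the map b : ⋀² A₁ → A₃, as an alternating bilinear map
    (b : (R × (Fin (p+1) → R)) →ₗ[R] (R × (Fin (p+1) → R)) →ₗ[R] A₃)
    (hb : ∀ x, b x x = 0)
    -- the new multiplication: standard multiplication modified by b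
    (mul11 : (R × (Fin (p+1) → R)) → (R × (Fin (p+1) → R)) → A₃ × (Fin (p+1) → R))
    (mul12 : (R × (Fin (p+1) → R)) → (A₃ × (Fin (p+1) → R)) → A₃)
    (hmul11 : ∀ x y, mul11 x y = (0, x.1 • y.2 - y.1 • x.2) + d₃ (b x y))
    (hmul12 : ∀ x f, mul12 x f = x.1 • f.1 + b (d₂ f) x) :
    -- graded commutativity in odd degree
    (∀ x y, mul11 x y = - mul11 y x) ∧ (∀ x, mul11 x x = 0) ∧
    -- Leibniz rule for degree 1 · degree 1
    (∀ x y, d₂ (mul11 x y) = d₁ x • y - d₁ y • x) ∧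
    -- Leibniz rule for degree 1 · degree 2
    (∀ x f, d₃ (mul12 x f) = d₁ x • f - mul11 x (d₂ f)) :=
  stmt5_general p A₃ d₃ d₂ d₁ hd₃ hd₂ hd₁ b hb mul11 mul12 hmul11 hmul12
end

section
/- Let R be a commutative Noetherian ring and I ⊂ R a grade 3 perfect ideal resolved by A: 0 → A₃ →^{d₃} A₂ →^{d₂} A₁ → R. For a rank-one free direct summand decomposition A₃ = C ⊕ L, let J_C = I_{rank C}(δ₄) where δ₄ = d₃|_C. Then I_{q−1}(d₃) ⊆ J_C ⊆ I_{q−2}(d₃), where q − 1 = rank A₃; consequently grade J_C ≥ grade I_{q−1}(d₃) = 3, and if grade J_C = 4 then grade I_{q−2}(d₃) ≥ 4. -/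
/-- `gradeGE R J k` : the grade of the ideal `J` is at least `k` (the unit ideal has
grade `+∞`). -/
def gradeGE (R : Type*) [CommRing R] (J : Ideal R) (k : ℕ) : Prop :=
  J = ⊤ ∨ ∃ rs : List R, rs.length = k ∧ (∀ r ∈ rs, r ∈ J) ∧ RingTheory.Sequence.IsRegular R rs

/-- The ideal of `r × r` minors of a matrix. -/
def minorsIdeal (R : Type*) [CommRing R] (r : ℕ) {m n : Type*} [Fintype m] [Fintype n]
    (A : Matrix m n R) : Ideal R :=
  Ideal.span { d | ∃ (f : Fin r → m) (g : Fin r → n),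
    Function.Injective f ∧ Function.Injective g ∧ d = (A.submatrix f g).det }

open Matrix

section DetHelpers
variable {R : Type*} [CommRing R]

lemma det_mul_mem_span {r : ℕ} {m : Type*} [Fintype m] [DecidableEq m]
    (A : Matrix (Fin r) m R) (B : Matrix m (Fin r) R) :
    (A * B).det ∈ Ideal.span {d | ∃ h : Fin r → m,
      Function.Injective h ∧ d = (B.submatrix h id).det} := by
  have hAB : (A * B).det
      = (Matrix.detRowAlternating : ((Fin r → R) [⋀^Fin r]→ₗ[R] R)).toMultilinearMap
        (fun i => ∑ k : m, A i k • B k) := by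
    congr 1
    ext i j
    simp [Matrix.mul_apply]
  rw [hAB, MultilinearMap.map_sum]
  apply Ideal.sum_mem
  intro h _
  have hsmul : (Matrix.detRowAlternating : ((Fin r → R) [⋀^Fin r]→ₗ[R] R)).toMultilinearMap
      (fun i => A i (h i) • B (h i))
      = (∏ i, A i (h i)) • (B.submatrix h id).det := by
    rw [MultilinearMap.map_smul_univ]
    rfl
  rw [hsmul]
  by_cases hinj : Function.Injective h
  · exact Submodule.smul_of_tower_mem _ _ (Ideal.subset_span ⟨h, hinj, rfl⟩)
  · have : (B.submatrix h id).det = 0 := by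
      simp only [Function.Injective, not_forall] at hinj
      obtain ⟨i, j, hij, hne⟩ := hinj
      exact Matrix.det_zero_of_row_eq hne (by ext k; simp [hij])
    rw [this, smul_zero]
    exact Ideal.zero_mem _

lemma minorsIdeal_mul_le {k : ℕ} {m n l : Type*} [Fintype m] [Fintype n] [Fintype l]
    [DecidableEq n] (d : Matrix m n R) (S : Matrix n l R) :
    minorsIdeal R k (d * S) ≤ minorsIdeal R k d := by
  rw [minorsIdeal, Ideal.span_le]
  rintro x ⟨f, g, hf, hg, rfl⟩
  have hsub : (d * S).submatrix f g = d.submatrix f id * S.submatrix id g :=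
    Matrix.submatrix_mul _ _ _ _ _ Function.bijective_id
  rw [hsub, ← Matrix.det_transpose, Matrix.transpose_mul]
  have := det_mul_mem_span ((S.submatrix id g).transpose) ((d.submatrix f id).transpose)
  refine Ideal.span_le.mpr ?_ this
  rintro y ⟨h, hh, rfl⟩
  have : ((d.submatrix f id).transpose.submatrix h id) = (d.submatrix f h).transpose := by
    ext i j; rfl
  rw [this, Matrix.det_transpose]
  exact Ideal.subset_span ⟨f, h, hf, hh, rfl⟩

lemma minorsIdeal_submatrix_equiv {k : ℕ} {m n m' n' : Type*} [Fintype m] [Fintype n]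
    [Fintype m'] [Fintype n'] (eR : m' ≃ m) (eC : n' ≃ n) (X : Matrix m n R) :
    minorsIdeal R k (X.submatrix eR eC) = minorsIdeal R k X := by
  apply le_antisymm
  · rw [minorsIdeal, Ideal.span_le]
    rintro x ⟨f, g, hf, hg, rfl⟩
    exact Ideal.subset_span ⟨(eR : m' → m) ∘ f, (eC : n' → n) ∘ g,
      eR.injective.comp hf, eC.injective.comp hg, rfl⟩
  · rw [minorsIdeal, Ideal.span_le]
    rintro x ⟨f, g, hf, hg, rfl⟩
    refine Ideal.subset_span ⟨eR.symm ∘ f, eC.symm ∘ g,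
      eR.symm.injective.comp hf, eC.symm.injective.comp hg, ?_⟩
    congr 1
    ext i j
    simp [Matrix.submatrix_apply]

lemma minors_succ_le {n : ℕ} {m : Type*} [Fintype m] [DecidableEq m]
    (d : Matrix m (Fin (n+1)) R)
    (M : Matrix (Fin (n+1)) (Fin (n+1)) R) (hM : IsUnit M.det)
    (S : Matrix (Fin (n+1)) (Fin n) R) (hS : ∀ i j, S i j = M i (Fin.castSucc j)) :
    minorsIdeal R (n+1) d ≤ minorsIdeal R n (d * S) := by
  rw [minorsIdeal, Ideal.span_le]
  rintro x ⟨f, g, hf, hg, rfl⟩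
  have hgbij : Function.Bijective g := Finite.injective_iff_bijective.mp hg
  set σ : Equiv.Perm (Fin (n+1)) := Equiv.ofBijective g hgbij with hσ
  have hsub : d.submatrix f g = (d.submatrix f id).submatrix id σ := by
    ext i j; simp [hσ, Matrix.submatrix_apply]
  rw [hsub, Matrix.det_permute' σ (d.submatrix f id)]
  apply Ideal.mul_mem_left
  rw [← Ideal.unit_mul_mem_iff_mem _ hM]
  have hdet : M.det * (d.submatrix f id).det = ((d * M).submatrix f id).det := by
    have : (d * M).submatrix f id = d.submatrix f id * M := by
      have := Matrix.submatrix_mul d M f (id : Fin (n+1) → Fin (n+1)) id Function.bijective_id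
      simpa using this
    rw [this, Matrix.det_mul, mul_comm]
  rw [hdet]
  rw [Matrix.det_succ_column ((d * M).submatrix f id) (Fin.last n)]
  apply Ideal.sum_mem
  intro i _
  apply Ideal.mul_mem_left
  have hcof : ((d * M).submatrix f id).submatrix i.succAbove (Fin.last n).succAbove
      = (d * S).submatrix (f ∘ i.succAbove) id := by
    rw [Fin.succAbove_last]
    ext a b
    simp only [Matrix.submatrix_apply, Function.comp_apply, Matrix.mul_apply, id_eq]
    refine Finset.sum_congr rfl fun k _ => ?_
    rw [hS]
  rw [hcof]
  exact Ideal.subset_span ⟨f ∘ i.succAbove, id,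
    hf.comp (Fin.succAbove_right_injective), Function.injective_id, rfl⟩

end DetHelpers

section Split
variable {A : Type*} [CommRing A]

lemma exists_left_inverse_matrix
    {n₀ n₁ n₂ n₃ : ℕ}
    (g₁ : Matrix (Fin n₀) (Fin n₁) A) (g₂ : Matrix (Fin n₁) (Fin n₂) A)
    (g₃ : Matrix (Fin n₂) (Fin n₃) A)
    (hsurj : Function.Surjective g₁.mulVecLin)
    (h12 : LinearMap.ker g₁.mulVecLin = LinearMap.range g₂.mulVecLin)
    (h23 : LinearMap.ker g₂.mulVecLin = LinearMap.range g₃.mulVecLin)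
    (hinj : Function.Injective g₃.mulVecLin) :
    ∃ T : Matrix (Fin n₃) (Fin n₂) A, T * g₃ = 1 := by
  obtain ⟨s₁, hs₁⟩ := Module.projective_lifting_property g₁.mulVecLin LinearMap.id hsurj
  have hs₁' : ∀ x, g₁.mulVecLin (s₁ x) = x := fun x => LinearMap.ext_iff.mp hs₁ x
  set K₁ := LinearMap.ker g₁.mulVecLin with hK₁
  -- K₁ is a retract of a free module, hence projective
  have hmem₁ : ∀ v : Fin n₁ → A,
      ((LinearMap.id : (Fin n₁ → A) →ₗ[A] (Fin n₁ → A)) - s₁ ∘ₗ g₁.mulVecLin) v ∈ K₁ := by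
    intro v
    have : g₁.mulVecLin (((LinearMap.id : (Fin n₁ → A) →ₗ[A] (Fin n₁ → A)) - s₁ ∘ₗ g₁.mulVecLin) v) = 0 := by
      have hv : ((LinearMap.id : (Fin n₁ → A) →ₗ[A] (Fin n₁ → A)) - s₁ ∘ₗ g₁.mulVecLin) v
          = v - s₁ (g₁.mulVecLin v) := rfl
      rw [hv, map_sub, hs₁' (g₁.mulVecLin v), sub_self]
    exact this
  have hproj : Module.Projective A K₁ := by
    refine Module.Projective.of_split K₁.subtype
      (LinearMap.codRestrict K₁ ((LinearMap.id : (Fin n₁ → A) →ₗ[A] (Fin n₁ → A)) - s₁ ∘ₗ g₁.mulVecLin) hmem₁)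
      (LinearMap.ext fun k => Subtype.ext ?_)
    have hk : g₁.mulVecLin (k : Fin n₁ → A) = 0 := k.2
    show (k : Fin n₁ → A) - s₁ (g₁.mulVecLin k) = k
    rw [hk, map_zero, sub_zero]
  -- a section of g₂ onto K₁
  have hrange : LinearMap.range g₂.mulVecLin ≤ K₁ := h12.ge
  set g₂' : (Fin n₂ → A) →ₗ[A] K₁ :=
    g₂.mulVecLin.codRestrict K₁ (fun v => hrange ⟨v, rfl⟩) with hg₂'
  have hg₂'surj : Function.Surjective g₂' := by
    rintro ⟨k, hk⟩
    obtain ⟨v, hv⟩ := h12.le hk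
    exact ⟨v, Subtype.ext hv⟩
  obtain ⟨s₂, hs₂⟩ := Module.projective_lifting_property g₂' LinearMap.id hg₂'surj
  -- retraction of F₂ onto ker g₂
  have hmem : ∀ v : Fin n₂ → A, v - s₂ (g₂' v) ∈ LinearMap.ker g₂.mulVecLin := by
    intro v
    have h2 : g₂' (s₂ (g₂' v)) = g₂' v := LinearMap.ext_iff.mp hs₂ (g₂' v)
    have : g₂.mulVecLin (v - s₂ (g₂' v)) = 0 := by
      rw [map_sub]
      have e1 : g₂.mulVecLin (s₂ (g₂' v)) = (g₂' (s₂ (g₂' v)) : Fin n₁ → A) := rfl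
      have e2 : g₂.mulVecLin v = (g₂' v : Fin n₁ → A) := rfl
      rw [e1, e2, h2, sub_self]
    exact this
  set r₂ : (Fin n₂ → A) →ₗ[A] LinearMap.ker g₂.mulVecLin :=
    ((LinearMap.id : (Fin n₂ → A) →ₗ[A] (Fin n₂ → A)) - s₂ ∘ₗ g₂').codRestrict _ hmem with hr₂
  set e := LinearEquiv.ofInjective g₃.mulVecLin hinj with he
  set Tlin : (Fin n₂ → A) →ₗ[A] (Fin n₃ → A) :=
    e.symm.toLinearMap ∘ₗ (LinearEquiv.ofEq _ _ h23).toLinearMap ∘ₗ r₂ with hT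
  have hTid : Tlin ∘ₗ g₃.mulVecLin = LinearMap.id := by
    refine LinearMap.ext fun v => ?_
    show Tlin (g₃.mulVecLin v) = v
    have hker : g₃.mulVecLin v ∈ LinearMap.ker g₂.mulVecLin := by
      rw [h23]; exact ⟨v, rfl⟩
    have hg₂'z : g₂' (g₃.mulVecLin v) = 0 := Subtype.ext hker
    have hr₂v : r₂ (g₃.mulVecLin v) = ⟨g₃.mulVecLin v, hker⟩ := by
      apply Subtype.ext
      show g₃.mulVecLin v - s₂ (g₂' (g₃.mulVecLin v)) = g₃.mulVecLin v
      rw [hg₂'z, map_zero, sub_zero]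
    rw [hT]
    simp only [LinearMap.coe_comp, Function.comp_apply, LinearEquiv.coe_coe, hr₂v]
    have h1 : (LinearEquiv.ofEq _ _ h23) ⟨g₃.mulVecLin v, hker⟩
        = ⟨g₃.mulVecLin v, h23 ▸ hker⟩ := rfl
    rw [h1]
    have h2 : (⟨g₃.mulVecLin v, h23 ▸ hker⟩ : LinearMap.range g₃.mulVecLin) = e v := by
      apply Subtype.ext
      simp [he]
    rw [h2, LinearEquiv.symm_apply_apply]
  refine ⟨LinearMap.toMatrix' Tlin, ?_⟩
  have hmat : g₃ = LinearMap.toMatrix' g₃.mulVecLin := by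
    rw [← Matrix.toLin'_apply', LinearMap.toMatrix'_toLin']
  calc LinearMap.toMatrix' Tlin * g₃
      = LinearMap.toMatrix' Tlin * LinearMap.toMatrix' g₃.mulVecLin := by rw [← hmat]
    _ = LinearMap.toMatrix' (Tlin ∘ₗ g₃.mulVecLin) := (LinearMap.toMatrix'_comp _ _).symm
    _ = 1 := by rw [hTid, LinearMap.toMatrix'_id]

end Split

section Localize
variable {R : Type*} [CommRing R] (x : R)

local notation "Ax" => Localization.Away x
local notation "φ" => algebraMap R (Localization.Away x)

lemma away_exists_int_vec {n : ℕ} (w : Fin n → Ax) :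
    ∃ (k : ℕ) (v : Fin n → R), ∀ i, φ (v i) = (x ^ k : R) • w i := by
  obtain ⟨b, hb⟩ := IsLocalization.exist_integer_multiples (Submonoid.powers x)
    Finset.univ w
  obtain ⟨k, hk⟩ := (Submonoid.mem_powers_iff _ _).mp b.2
  choose v hv using fun i => hb i (Finset.mem_univ i)
  refine ⟨k, v, fun i => ?_⟩
  rw [hv i]
  have hbk : (b : R) = x ^ k := hk.symm
  rw [hbk]

lemma away_exists_pow_mul_eq_zero {n : ℕ} (v : Fin n → R)
    (h : ∀ i, φ (v i) = 0) : ∃ k, ∀ i, x ^ k * v i = 0 := by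
  have h' : ∀ i, ∃ k : ℕ, x ^ k * v i = 0 := by
    intro i
    obtain ⟨m, hm⟩ := (IsLocalization.map_eq_zero_iff (Submonoid.powers x) Ax (v i)).mp (h i)
    obtain ⟨k, hk⟩ := (Submonoid.mem_powers_iff _ _).mp m.2
    exact ⟨k, by rw [hk]; exact hm⟩
  choose f hf using h'
  refine ⟨Finset.univ.sup f, fun i => ?_⟩
  have hle : f i ≤ Finset.univ.sup f := Finset.le_sup (Finset.mem_univ i)
  have hsplit : x ^ Finset.univ.sup f = x ^ (Finset.univ.sup f - f i) * x ^ f i := by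
    rw [← pow_add]
    congr 1
    omega
  rw [hsplit, mul_assoc, hf i, mul_zero]

lemma away_map_mulVec_comm {m n : ℕ} (d : Matrix (Fin m) (Fin n) R) (v : Fin n → R) :
    (d.map φ).mulVecLin (fun j => φ (v j)) = fun i => φ (d.mulVecLin v i) := by
  funext i
  simp [Matrix.mulVecLin_apply, Matrix.mulVec, dotProduct, map_sum]

lemma away_map_ker_le_range {m n k : ℕ} (u : Matrix (Fin m) (Fin n) R)
    (v : Matrix (Fin n) (Fin k) R)
    (h : LinearMap.ker u.mulVecLin ≤ LinearMap.range v.mulVecLin) :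
    LinearMap.ker (u.map φ).mulVecLin ≤ LinearMap.range (v.map φ).mulVecLin := by
  intro w hw
  rw [LinearMap.mem_ker] at hw
  obtain ⟨K, vv, hvv⟩ := away_exists_int_vec x w
  have h0 : ∀ i, φ (u.mulVecLin vv i) = 0 := by
    have e1 : (u.map φ).mulVecLin (fun j => φ (vv j)) = fun i => φ (u.mulVecLin vv i) :=
      away_map_mulVec_comm x u vv
    have e2 : (u.map φ).mulVecLin (fun j => φ (vv j)) = 0 := by
      have : (fun j => φ (vv j)) = (x ^ K : R) • w := by
        funext j; rw [hvv j]; rfl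
      rw [this, LinearMap.map_smul_of_tower, hw, smul_zero]
    intro i
    rw [← congrFun e1 i, e2]
    rfl
  obtain ⟨K', hK'⟩ := away_exists_pow_mul_eq_zero x _ h0
  have hker : u.mulVecLin ((x ^ K' : R) • vv) = 0 := by
    rw [LinearMap.map_smul]
    funext i
    simpa [smul_eq_mul] using hK' i
  obtain ⟨z, hz⟩ := h hker
  -- now w is a unit multiple of the image of z
  have himg : (v.map φ).mulVecLin (fun j => φ (z j)) = (φ x) ^ (K' + K) • w := by
    rw [away_map_mulVec_comm x v z]
    funext i
    rw [hz]
    have : ((x ^ K' : R) • vv) = fun j => x ^ K' * vv j := rfl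
    rw [this]
    show φ (x ^ K' * vv i) = ((φ x) ^ (K' + K) • w) i
    rw [_root_.map_mul, hvv i, map_pow]
    have : ((x ^ K : R) • w i) = (φ x) ^ K * w i := by
      rw [Algebra.smul_def, map_pow]
    rw [this]
    show φ x ^ K' * (φ x ^ K * w i) = φ x ^ (K' + K) * w i
    rw [← mul_assoc, ← pow_add]
  have hu : IsUnit ((φ x) ^ (K' + K)) :=
    (IsLocalization.Away.algebraMap_isUnit x).pow _
  have hww : ((hu.unit⁻¹ : (Localization.Away x)ˣ) : Localization.Away x)
      • (((φ x) ^ (K' + K)) • w) = w := by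
    rw [smul_smul]
    rw [hu.val_inv_mul, one_smul]
  rw [← hww, ← himg]
  exact Submodule.smul_mem _ _ ⟨_, rfl⟩

lemma away_map_mulVecLin_injective {m n : ℕ} (d : Matrix (Fin m) (Fin n) R)
    (h : Function.Injective d.mulVecLin) :
    Function.Injective (d.map φ).mulVecLin := by
  rw [injective_iff_map_eq_zero]
  intro w hw
  obtain ⟨K, vv, hvv⟩ := away_exists_int_vec x w
  have h0 : ∀ i, φ (d.mulVecLin vv i) = 0 := by
    have e1 := away_map_mulVec_comm x d vv
    have e2 : (d.map φ).mulVecLin (fun j => φ (vv j)) = 0 := by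
      have : (fun j => φ (vv j)) = (x ^ K : R) • w := by
        funext j; rw [hvv j]; rfl
      rw [this, LinearMap.map_smul_of_tower, hw, smul_zero]
    intro i
    rw [← congrFun e1 i, e2]
    rfl
  obtain ⟨K', hK'⟩ := away_exists_pow_mul_eq_zero x _ h0
  have hker : d.mulVecLin ((x ^ K' : R) • vv) = 0 := by
    rw [LinearMap.map_smul]
    funext i
    simpa [smul_eq_mul] using hK' i
  have hz : ((x ^ K' : R) • vv) = 0 := by
    apply h
    rw [hker, map_zero]
  -- hence x^(K'+K) • w = 0
  have h1 : (φ x) ^ (K' + K) • w = 0 := by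
    funext i
    show φ x ^ (K' + K) * w i = 0
    have : φ x ^ K' * (φ x ^ K * w i) = φ x ^ (K' + K) * w i := by
      rw [← mul_assoc, ← pow_add]
    rw [← this]
    have hKi : (x ^ K : R) • w i = φ (vv i) := (hvv i).symm
    rw [Algebra.smul_def, map_pow] at hKi
    rw [hKi, ← map_pow, ← _root_.map_mul]
    have : x ^ K' * vv i = 0 := congrFun hz i
    rw [this, map_zero]
  have hu : IsUnit ((φ x) ^ (K' + K)) :=
    (IsLocalization.Away.algebraMap_isUnit x).pow _
  have hww : ((hu.unit⁻¹ : (Localization.Away x)ˣ) : Localization.Away x)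
      • (((φ x) ^ (K' + K)) • w) = w := by
    rw [smul_smul]
    rw [hu.val_inv_mul, one_smul]
  rw [← hww, h1, smul_zero]

lemma away_map_range_le_ker {m n k : ℕ} (u : Matrix (Fin m) (Fin n) R)
    (v : Matrix (Fin n) (Fin k) R)
    (h : LinearMap.range v.mulVecLin ≤ LinearMap.ker u.mulVecLin) :
    LinearMap.range (v.map φ).mulVecLin ≤ LinearMap.ker (u.map φ).mulVecLin := by
  have huv : u * v = 0 := by
    ext i j
    have : u.mulVecLin (v.mulVecLin (Pi.single j 1)) = 0 := h ⟨Pi.single j 1, rfl⟩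
    have h2 := congrFun this i
    rw [Matrix.mulVecLin_apply, Matrix.mulVecLin_apply, Matrix.mulVec_mulVec] at h2
    rw [Matrix.mulVec_single] at h2
    simpa using h2
  rintro _ ⟨z, rfl⟩
  rw [LinearMap.mem_ker, Matrix.mulVecLin_apply, Matrix.mulVecLin_apply,
    Matrix.mulVec_mulVec, ← Matrix.map_mul, huv]
  simp [Matrix.mulVec]

end Localize

open RingTheory.Sequence Pointwise

section RegSeq

universe v

variable {R : Type*} [CommRing R]

lemma wr_ses (rs : List R) :
    ∀ {M₁ M₂ M₃ : Type v} [AddCommGroup M₁] [AddCommGroup M₂] [AddCommGroup M₃]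
      [Module R M₁] [Module R M₂] [Module R M₃]
      (f : M₁ →ₗ[R] M₂) (g : M₂ →ₗ[R] M₃),
      Function.Injective f → Function.Surjective g → Function.Exact f g →
      IsWeaklyRegular M₁ rs → IsWeaklyRegular M₃ rs → IsWeaklyRegular M₂ rs := by
  induction rs with
  | nil => intros; exact IsWeaklyRegular.nil _ _
  | cons r rs ih =>
    intro M₁ M₂ M₃ _ _ _ _ _ _ f g hf hg hfg h1 h3
    rw [RingTheory.Sequence.isWeaklyRegular_cons_iff] at h1 h3 ⊢
    obtain ⟨hr1, h1'⟩ := h1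
    obtain ⟨hr3, h3'⟩ := h3
    have hrange : LinearMap.range f = LinearMap.ker g := (LinearMap.exact_iff.mp hfg).symm
    refine ⟨isSMulRegular_of_range_eq_ker hf hrange hr1 hr3, ?_⟩
    -- exactness of the quotiented sequence
    have hz : Function.Exact (0 : M₁ →ₗ[R] M₁) f := by
      intro y
      constructor
      · intro h0
        have h0' : f y = f 0 := by rw [h0, map_zero]
        exact ⟨0, by rw [LinearMap.zero_apply]; exact (hf h0').symm⟩
      · rintro ⟨z, rfl⟩
        simp
    have h4 := QuotSMulTop.map_first_exact_on_four_term_exact_of_isSMulRegular_last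
      hz hfg hr3
    have hmap0 : QuotSMulTop.map (M := M₁) (M' := M₁) r (0 : M₁ →ₗ[R] M₁) = 0 :=
      map_zero _
    rw [hmap0] at h4
    have hfinj : Function.Injective (QuotSMulTop.map r f) := by
      intro a b hab
      have hab0 : QuotSMulTop.map r f (a - b) = 0 := by rw [map_sub, hab, sub_self]
      obtain ⟨c, hc⟩ := (h4 (a - b)).mp hab0
      rw [LinearMap.zero_apply] at hc
      have : a - b = 0 := hc.symm
      exact sub_eq_zero.mp this
    exact ih (QuotSMulTop.map r f) (QuotSMulTop.map r g) hfinj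
      (QuotSMulTop.map_surjective r hg) (QuotSMulTop.map_exact r hfg hg) h1' h3'

lemma wr_pow_head {M : Type v} [AddCommGroup M] [Module R M] (r : R)
    (hr : IsSMulRegular M r) (rs : List R)
    (h : IsWeaklyRegular (QuotSMulTop r M) rs) :
    ∀ (e : ℕ), e ≠ 0 → IsWeaklyRegular (QuotSMulTop (r ^ e) M) rs := by
  intro e
  induction e with
  | zero => intro h0; exact absurd rfl h0
  | succ e ih =>
    intro _
    by_cases he : e = 0
    · subst he
      rw [pow_one]
      exact h
    · have hIH := ih he
      have hle₁ : ((r ^ e) • ⊤ : Submodule R M)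
          ≤ ((r ^ (e+1)) • ⊤ : Submodule R M).comap (LinearMap.lsmul R M r) := by
        rintro m ⟨y, hy, rfl⟩
        refine Submodule.mem_comap.mpr ?_
        show r • (r ^ e • y) ∈ ((r ^ (e+1)) • ⊤ : Submodule R M)
        rw [smul_smul, ← pow_succ']
        exact Submodule.smul_mem_pointwise_smul y _ ⊤ trivial
      have hle₂ : ((r ^ (e+1)) • ⊤ : Submodule R M)
          ≤ (r • ⊤ : Submodule R M).comap (LinearMap.id : M →ₗ[R] M) := by
        rintro m ⟨y, hy, rfl⟩
        refine Submodule.mem_comap.mpr ?_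
        show (r ^ (e+1)) • y ∈ (r • ⊤ : Submodule R M)
        rw [pow_succ', ← smul_smul]
        exact Submodule.smul_mem_pointwise_smul _ _ ⊤ trivial
      set f : QuotSMulTop (r ^ e) M →ₗ[R] QuotSMulTop (r ^ (e+1)) M :=
        Submodule.mapQ _ _ (LinearMap.lsmul R M r) hle₁ with hfdef
      set g : QuotSMulTop (r ^ (e+1)) M →ₗ[R] QuotSMulTop r M :=
        Submodule.mapQ _ _ LinearMap.id hle₂ with hgdef
      have hf : Function.Injective f := by
        rw [← LinearMap.ker_eq_bot, Submodule.eq_bot_iff]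
        intro a ha
        obtain ⟨m, rfl⟩ := Submodule.Quotient.mk_surjective _ a
        rw [LinearMap.mem_ker, hfdef, Submodule.mapQ_apply, Submodule.Quotient.mk_eq_zero] at ha
        rw [Submodule.Quotient.mk_eq_zero]
        obtain ⟨y, hy, hxy⟩ := ha
        have h5 : r • m = r • ((r ^ e) • y) := by
          rw [smul_smul, ← pow_succ']
          exact hxy.symm
        have hm : m = (r ^ e) • y := hr h5
        rw [hm]
        exact Submodule.smul_mem_pointwise_smul _ _ ⊤ trivial
      have hg : Function.Surjective g := by
        intro a
        obtain ⟨m, rfl⟩ := Submodule.Quotient.mk_surjective _ a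
        exact ⟨Submodule.Quotient.mk m, by rw [hgdef, Submodule.mapQ_apply]; rfl⟩
      have hfg : Function.Exact f g := by
        rw [LinearMap.exact_iff]
        apply le_antisymm
        · rintro a ha
          rw [LinearMap.mem_ker] at ha
          obtain ⟨m, rfl⟩ := Submodule.Quotient.mk_surjective _ a
          rw [hgdef, Submodule.mapQ_apply, Submodule.Quotient.mk_eq_zero] at ha
          obtain ⟨y, hy, hxy⟩ := ha
          refine ⟨Submodule.Quotient.mk y, ?_⟩
          rw [hfdef, Submodule.mapQ_apply]
          congr 1
        · rintro _ ⟨a, rfl⟩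
          obtain ⟨m, rfl⟩ := Submodule.Quotient.mk_surjective _ a
          rw [LinearMap.mem_ker, hfdef, hgdef, Submodule.mapQ_apply, Submodule.mapQ_apply,
            Submodule.Quotient.mk_eq_zero]
          show r • m ∈ (r • ⊤ : Submodule R M)
          exact Submodule.smul_mem_pointwise_smul _ _ ⊤ trivial
      exact wr_ses rs f g hf hg hfg hIH h

lemma wr_pow_map {M : Type v} [AddCommGroup M] [Module R M] (e : R → ℕ) :
    ∀ (rs : List R), (∀ r ∈ rs, e r ≠ 0) → IsWeaklyRegular M rs →
      IsWeaklyRegular M (rs.map fun r => r ^ e r) := by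
  intro rs
  induction rs generalizing M with
  | nil => intros; simpa using IsWeaklyRegular.nil R M
  | cons r rs ih =>
    intro he h
    rw [List.map_cons, RingTheory.Sequence.isWeaklyRegular_cons_iff]
    rw [RingTheory.Sequence.isWeaklyRegular_cons_iff] at h
    obtain ⟨hr, h'⟩ := h
    refine ⟨hr.pow _, ?_⟩
    have := ih (fun a ha => he a (List.mem_cons_of_mem r ha)) h'
    exact wr_pow_head r hr _ this (e r) (he r List.mem_cons_self)

end RegSeq

section Misc
open RingTheory.Sequence Matrix

variable {R : Type*} [CommRing R]

lemma mem_radical_of_one_mem_map_away (x : R) (K : Ideal R)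
    (h : (1 : Localization.Away x) ∈ Ideal.map (algebraMap R (Localization.Away x)) K) :
    x ∈ K.radical := by
  rw [Ideal.radical_eq_sInf, Ideal.mem_sInf]
  rintro P ⟨hKP, hP⟩
  by_contra hx
  have hdisj : Disjoint ((Submonoid.powers x) : Set R) (P : Set R) := by
    rw [Set.disjoint_left]
    rintro y ⟨n, rfl⟩ hyP
    exact hx (hP.mem_of_pow_mem n hyP)
  have hprime := IsLocalization.isPrime_of_isPrime_disjoint (Submonoid.powers x)
    (Localization.Away x) P hP hdisj
  exact hprime.ne_top ((Ideal.eq_top_iff_one _).mpr (Ideal.map_mono hKP h))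

lemma minorsIdeal_map_le {S : Type*} [CommRing S] (f : R →+* S) (r : ℕ)
    {m n : Type*} [Fintype m] [Fintype n] (d : Matrix m n R) :
    minorsIdeal S r (d.map f) ≤ Ideal.map f (minorsIdeal R r d) := by
  rw [minorsIdeal, Ideal.span_le]
  rintro _ ⟨a, g, ha, hg, rfl⟩
  have h1 : (d.map f).submatrix a g = (d.submatrix a g).map f := rfl
  have h2 : ((d.submatrix a g).map f).det = f ((d.submatrix a g).det) := by
    rw [RingHom.map_det, RingHom.mapMatrix_apply]
  rw [h1, h2]
  exact Ideal.mem_map_of_mem f (Ideal.subset_span ⟨a, g, ha, hg, rfl⟩)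

lemma away_d1_surj {p' : ℕ} (d : Matrix (Fin 1) (Fin p') R) (j₀ : Fin p') :
    Function.Surjective ((d.map (algebraMap R (Localization.Away (d 0 j₀)))).mulVecLin) := by
  intro w
  have hu : IsUnit (algebraMap R (Localization.Away (d 0 j₀)) (d 0 j₀)) :=
    IsLocalization.Away.algebraMap_isUnit (d 0 j₀)
  refine ⟨Pi.single j₀ ((hu.unit⁻¹ : _) * w 0), ?_⟩
  funext i
  have hi : i = 0 := Subsingleton.elim i 0
  subst hi
  rw [Matrix.mulVecLin_apply, Matrix.mulVec_single]
  show (d.map (algebraMap R (Localization.Away (d 0 j₀)))) 0 j₀ * ((hu.unit⁻¹ : (Localization.Away (d 0 j₀))ˣ) * w 0) = w 0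
  rw [Matrix.map_apply, ← mul_assoc, hu.mul_val_inv, one_mul]

lemma surjective_of_unit_minor {A : Type*} [CommRing A] {m r : ℕ}
    (D : Matrix (Fin m) (Fin r) A) (f : Fin r → Fin m)
    (hu : IsUnit ((D.submatrix f id).det)) :
    Function.Surjective (Dᵀ.mulVecLin) := by
  classical
  set C : Matrix (Fin r) (Fin r) A := Dᵀ.submatrix id f with hC
  have hCdet : IsUnit C.det := by
    have h1 : C = (D.submatrix f id)ᵀ := by ext a b; rfl
    rw [h1, Matrix.det_transpose]
    exact hu
  set P : Matrix (Fin m) (Fin r) A := Matrix.of (fun i k => if i = f k then 1 else 0) with hP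
  have hDP : Dᵀ * P = C := by
    ext a k
    rw [Matrix.mul_apply]
    simp only [hP, Matrix.of_apply, mul_ite, mul_one, mul_zero]
    rw [Finset.sum_ite_eq' Finset.univ (f k) (fun i => Dᵀ a i)]
    simp [hC]
  have hW : Dᵀ * (P * C⁻¹) = 1 := by
    rw [← Matrix.mul_assoc, hDP, Matrix.mul_nonsing_inv _ hCdet]
  intro w
  refine ⟨(P * C⁻¹) *ᵥ w, ?_⟩
  rw [Matrix.mulVecLin_apply, Matrix.mulVec_mulVec, hW, Matrix.one_mulVec]

lemma gradeGE_of_le_radical {K K' : Ideal R} {k : ℕ}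
    (hle : K ≤ K'.radical) (h : gradeGE R K k) : gradeGE R K' k := by
  rcases h with h | ⟨rs, hlen, hmem, hreg⟩
  · left
    rw [← Ideal.radical_eq_top]
    exact top_le_iff.mp (h ▸ hle)
  · by_cases hK' : K' = ⊤
    · exact Or.inl hK'
    right
    classical
    set eo : R → ℕ := fun r => if h : ∃ n : ℕ, n ≠ 0 ∧ r ^ n ∈ K' then h.choose else 1 with heo
    have heo_spec : ∀ r ∈ rs, eo r ≠ 0 ∧ r ^ eo r ∈ K' := by
      intro r hr
      obtain ⟨n, hn⟩ := Ideal.mem_radical_iff.mp (hle (hmem r hr))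
      have hn0 : n ≠ 0 := by
        rintro rfl
        rw [pow_zero] at hn
        exact hK' ((Ideal.eq_top_iff_one _).mpr hn)
      have hex : ∃ m : ℕ, m ≠ 0 ∧ r ^ m ∈ K' := ⟨n, hn0, hn⟩
      have : eo r = hex.choose := by rw [heo]; simp only [dif_pos hex]
      rw [this]
      exact hex.choose_spec
    refine ⟨rs.map (fun r => r ^ eo r), ?_, ?_, ?_⟩
    · rw [List.length_map, hlen]
    · intro y hy
      rw [List.mem_map] at hy
      obtain ⟨r, hr, rfl⟩ := hy
      exact (heo_spec r hr).2
    · rw [RingTheory.Sequence.isRegular_iff]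
      constructor
      · exact wr_pow_map eo rs (fun r hr => (heo_spec r hr).1) hreg.toIsWeaklyRegular
      · intro heq
        apply hK'
        rw [Ideal.eq_top_iff_one]
        have h1 : (1 : R) ∈ (⊤ : Submodule R R) := trivial
        rw [heq] at h1
        have hofl : Ideal.ofList (rs.map (fun r => r ^ eo r)) ≤ K' := by
          rw [Ideal.ofList, Ideal.span_le]
          intro y hy
          simp only [Set.mem_setOf_eq] at hy
          obtain ⟨r, hr, rfl⟩ := List.mem_map.mp hy
          exact (heo_spec r hr).2
        have hsm : Ideal.ofList (rs.map (fun r => r ^ eo r)) • (⊤ : Submodule R R) ≤ K' := by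
          rw [Submodule.smul_le]
          intro a ha b _
          rw [smul_eq_mul]
          exact Ideal.mul_mem_right b K' (hofl ha)
        exact hsm h1

end Misc

/-!
STATEMENT 12.  `R` Noetherian, `I ⊂ R` a grade-3 perfect ideal resolved by
`A : 0 → A₃ →^{d₃} A₂ →^{d₂} A₁ →^{d₁} R` with `rank A₃ = q−1` (the differentials are
given by matrices; acyclicity of `A` and of its dual — perfection — are hypotheses).
A rank-one free direct summand decomposition `A₃ = C ⊕ L` is encoded by an invertible
`(q−1)×(q−1)` matrix `M` whose first `q−2` columns `S` give the inclusion `C → A₃`, so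
`δ₄ = d₃|_C` has matrix `d₃ * S` and `J_C = I_{q-2}(d₃ * S)`.
Conclusions: `I_{q−1}(d₃) ⊆ J_C ⊆ I_{q−2}(d₃)`; consequently (since
`grade I_{q−1}(d₃) = 3`) `grade J_C ≥ 3`, and if `grade J_C ≥ 4` then
`grade I_{q−2}(d₃) ≥ 4`.
-/
theorem stmt12 {R : Type*} [CommRing R] [IsNoetherianRing R] (p q : ℕ)
    (hp : 1 ≤ p) (hq : 3 ≤ q)
    (d₁ : Matrix (Fin 1) (Fin (p+2)) R)
    (d₂ : Matrix (Fin (p+2)) (Fin (p+q)) R)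
    (d₃ : Matrix (Fin (p+q)) (Fin (q-1)) R)
    -- A is a resolution of R/I
    (hinj : Function.Injective d₃.mulVecLin)
    (hex2 : LinearMap.ker d₂.mulVecLin = LinearMap.range d₃.mulVecLin)
    (hex1 : LinearMap.ker d₁.mulVecLin = LinearMap.range d₂.mulVecLin)
    -- perfection: the dual (transposed) complex is acyclic
    (hdinj : Function.Injective d₁.transpose.mulVecLin)
    (hdex1 : LinearMap.ker d₂.transpose.mulVecLin = LinearMap.range d₁.transpose.mulVecLin)
    (hdex2 : LinearMap.ker d₃.transpose.mulVecLin = LinearMap.range d₂.transpose.mulVecLin)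
    -- I is the proper grade-3 ideal generated by the entries of d₁
    (I : Ideal R) (hIdef : I = Ideal.span {x | ∃ j, x = d₁ 0 j})
    (hI : I ≠ ⊤) (hI3 : gradeGE R I 3) (hI4 : ¬ gradeGE R I 4)
    -- the rank-one decomposition A₃ = C ⊕ L
    (M : Matrix (Fin (q-1)) (Fin (q-1)) R) (hM : IsUnit M.det)
    (S : Matrix (Fin (q-1)) (Fin (q-2)) R)
    (hS : S = Matrix.of fun i j => M i (Fin.castLE (by omega) j))
    (J : Ideal R) (hJ : J = minorsIdeal R (q-2) (d₃ * S)) :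
    minorsIdeal R (q-1) d₃ ≤ J ∧
    J ≤ minorsIdeal R (q-2) d₃ ∧
    (gradeGE R (minorsIdeal R (q-1) d₃) 3 ∧ ¬ gradeGE R (minorsIdeal R (q-1) d₃) 4) ∧
    gradeGE R J 3 ∧
    (gradeGE R J 4 → gradeGE R (minorsIdeal R (q-2) d₃) 4) := by
  classical
  subst hJ
  have h21 : q - 1 = (q - 2) + 1 := by omega
  -- Part A : I_{q-1}(d₃) ≤ J
  have hA : minorsIdeal R (q-1) d₃ ≤ minorsIdeal R (q-2) (d₃ * S) := by
    set e : Fin ((q-2)+1) ≃ Fin (q-1) := finCongr h21.symm with he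
    have hdet' : IsUnit (M.submatrix ⇑e ⇑e).det := by
      rw [Matrix.det_submatrix_equiv_self]
      exact hM
    have hS' : ∀ i j, (S.submatrix ⇑e id) i j = (M.submatrix ⇑e ⇑e) i (Fin.castSucc j) := by
      intro i j
      rw [hS]
      simp only [Matrix.submatrix_apply, Matrix.of_apply, id_eq]
      congr 1
    have key := minors_succ_le (d₃.submatrix id ⇑e) (M.submatrix ⇑e ⇑e) hdet'
      (S.submatrix ⇑e id) hS'
    have hprod : d₃.submatrix id ⇑e * S.submatrix ⇑e id = d₃ * S := by
      have h1 := Matrix.submatrix_mul d₃ S id ⇑e id e.bijective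
      rw [Matrix.submatrix_id_id] at h1
      exact h1.symm
    have hlhs : minorsIdeal R ((q-2)+1) (d₃.submatrix id ⇑e) = minorsIdeal R (q-1) d₃ := by
      have h2 : d₃.submatrix id ⇑e = d₃.submatrix ⇑(Equiv.refl (Fin (p+q))) ⇑e := by
        rw [Equiv.coe_refl]
      rw [h2, minorsIdeal_submatrix_equiv]
      rw [← h21]
    rw [hprod, hlhs] at key
    exact key
  -- Part B : J ≤ I_{q-2}(d₃)
  have hB : minorsIdeal R (q-2) (d₃ * S) ≤ minorsIdeal R (q-2) d₃ :=
    minorsIdeal_mul_le d₃ S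
  -- Part D1 : I ≤ radical I_{q-1}(d₃)
  have hD1 : I ≤ (minorsIdeal R (q-1) d₃).radical := by
    rw [hIdef, Ideal.span_le]
    rintro x ⟨j, rfl⟩
    have hs := away_d1_surj d₁ j
    have h12 : LinearMap.ker ((d₁.map (algebraMap R (Localization.Away (d₁ 0 j)))).mulVecLin)
        = LinearMap.range ((d₂.map (algebraMap R (Localization.Away (d₁ 0 j)))).mulVecLin) :=
      le_antisymm (away_map_ker_le_range _ d₁ d₂ hex1.le) (away_map_range_le_ker _ d₁ d₂ hex1.ge)
    have h23 : LinearMap.ker ((d₂.map (algebraMap R (Localization.Away (d₁ 0 j)))).mulVecLin)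
        = LinearMap.range ((d₃.map (algebraMap R (Localization.Away (d₁ 0 j)))).mulVecLin) :=
      le_antisymm (away_map_ker_le_range _ d₂ d₃ hex2.le) (away_map_range_le_ker _ d₂ d₃ hex2.ge)
    have hinj' := away_map_mulVecLin_injective (d₁ 0 j) d₃ hinj
    obtain ⟨T, hT⟩ := exists_left_inverse_matrix _ _ _ hs h12 h23 hinj'
    have hdet : (T * (d₃.map (algebraMap R (Localization.Away (d₁ 0 j))))).det = 1 := by
      rw [hT, Matrix.det_one]
    have hmem := det_mul_mem_span T (d₃.map (algebraMap R (Localization.Away (d₁ 0 j))))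
    rw [hdet] at hmem
    have hspan : Ideal.span {dd | ∃ h : Fin (q-1) → Fin (p+q), Function.Injective h ∧
        dd = (((d₃.map (algebraMap R (Localization.Away (d₁ 0 j)))).submatrix h id)).det}
        ≤ minorsIdeal (Localization.Away (d₁ 0 j)) (q-1)
          (d₃.map (algebraMap R (Localization.Away (d₁ 0 j)))) := by
      rw [Ideal.span_le]
      rintro _ ⟨h, hh, rfl⟩
      exact Ideal.subset_span ⟨h, id, hh, Function.injective_id, rfl⟩
    exact mem_radical_of_one_mem_map_away _ _
      (minorsIdeal_map_le _ _ _ (hspan hmem))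
  -- Part D2 : I_{q-1}(d₃) ≤ radical I
  have hD2 : minorsIdeal R (q-1) d₃ ≤ I.radical := by
    rw [minorsIdeal, Ideal.span_le]
    rintro x ⟨f, g, hf, hg, rfl⟩
    set x₀ := (d₃.submatrix f g).det with hx₀
    have hxunit : IsUnit (algebraMap R (Localization.Away x₀) x₀) :=
      IsLocalization.Away.algebraMap_isUnit x₀
    have hgbij : Function.Bijective g := Finite.injective_iff_bijective.mp hg
    set σ : Equiv.Perm (Fin (q-1)) := Equiv.ofBijective g hgbij with hσ
    have hsub : (d₃.map (algebraMap R (Localization.Away x₀))).submatrix f g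
        = ((d₃.map (algebraMap R (Localization.Away x₀))).submatrix f id).submatrix id ⇑σ := by
      ext i j
      simp [hσ, Matrix.submatrix_apply]
    have hdet1 : ((d₃.map (algebraMap R (Localization.Away x₀))).submatrix f g).det
        = algebraMap R (Localization.Away x₀) x₀ := by
      have h1 : (d₃.map (algebraMap R (Localization.Away x₀))).submatrix f g
          = ((algebraMap R (Localization.Away x₀)).mapMatrix (d₃.submatrix f g)) := rfl
      rw [h1, ← RingHom.map_det]
    have heq : algebraMap R (Localization.Away x₀) x₀
        = ↑↑(Equiv.Perm.sign σ)
          * ((d₃.map (algebraMap R (Localization.Away x₀))).submatrix f id).det := by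
      rw [← hdet1, hsub, Matrix.det_permute']
    have hu : IsUnit (((d₃.map (algebraMap R (Localization.Away x₀))).submatrix f id).det) :=
      isUnit_of_mul_isUnit_right (heq ▸ hxunit)
    have hsurj0 := surjective_of_unit_minor (d₃.map (algebraMap R (Localization.Away x₀))) f hu
    have hsurj : Function.Surjective
        ((d₃ᵀ.map (algebraMap R (Localization.Away x₀))).mulVecLin) := by
      rw [Matrix.transpose_map]
      exact hsurj0
    have h12 : LinearMap.ker ((d₃ᵀ.map (algebraMap R (Localization.Away x₀))).mulVecLin)
        = LinearMap.range ((d₂ᵀ.map (algebraMap R (Localization.Away x₀))).mulVecLin) :=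
      le_antisymm (away_map_ker_le_range _ d₃ᵀ d₂ᵀ hdex2.le)
        (away_map_range_le_ker _ d₃ᵀ d₂ᵀ hdex2.ge)
    have h23 : LinearMap.ker ((d₂ᵀ.map (algebraMap R (Localization.Away x₀))).mulVecLin)
        = LinearMap.range ((d₁ᵀ.map (algebraMap R (Localization.Away x₀))).mulVecLin) :=
      le_antisymm (away_map_ker_le_range _ d₂ᵀ d₁ᵀ hdex1.le)
        (away_map_range_le_ker _ d₂ᵀ d₁ᵀ hdex1.ge)
    have hinj' := away_map_mulVecLin_injective x₀ d₁ᵀ hdinj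
    obtain ⟨T, hT⟩ := exists_left_inverse_matrix _ _ _ hsurj h12 h23 hinj'
    have h00 : ∑ jj : Fin (p+2),
        T 0 jj * (d₁ᵀ.map (algebraMap R (Localization.Away x₀))) jj 0 = 1 := by
      have h0 : (T * (d₁ᵀ.map (algebraMap R (Localization.Away x₀)))) 0 0
          = (1 : Matrix (Fin 1) (Fin 1) (Localization.Away x₀)) 0 0 := by rw [hT]
      rw [Matrix.mul_apply, Matrix.one_apply_eq] at h0
      exact h0
    have hmem1 : (1 : Localization.Away x₀)
        ∈ Ideal.map (algebraMap R (Localization.Away x₀)) I := by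
      rw [← h00]
      apply Ideal.sum_mem
      intro jj _
      apply Ideal.mul_mem_left
      have hd : (d₁ᵀ.map (algebraMap R (Localization.Away x₀))) jj 0
          = algebraMap R (Localization.Away x₀) (d₁ 0 jj) := rfl
      rw [hd]
      refine Ideal.mem_map_of_mem _ ?_
      rw [hIdef]
      exact Ideal.subset_span ⟨jj, rfl⟩
    exact mem_radical_of_one_mem_map_away _ _ hmem1
  have hg3 : gradeGE R (minorsIdeal R (q-1) d₃) 3 := gradeGE_of_le_radical hD1 hI3
  refine ⟨hA, hB, ⟨hg3, ?_⟩, ?_, ?_⟩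
  · intro h4
    exact hI4 (gradeGE_of_le_radical hD2 h4)
  · exact gradeGE_of_le_radical (hA.trans Ideal.le_radical) hg3
  · intro h4
    exact gradeGE_of_le_radical (hB.trans Ideal.le_radical) h4
end

section
/- Let R = ℂ[x_{ij} : 1 ≤ i,j ≤ n] be the polynomial ring on the entries of a generic n×n matrix X, and let B₂ be the free R-module of pairs (A,B) of n×n matrices with tr(A) = tr(B), modulo the span of (I,I). Then the symmetric bilinear form ⟨(A,B),(C,D)⟩ = tr(AC − BD) on B₂ is well-defined (independent of representatives modulo (I,I)) and nondegenerate, and the 2(n²−1) elements {(e_{ij},0), (0,e_{ji}) : i<j} ∪ {(e_{ii},e_{ii}) : i ≤ n−1} together with {(e_{ji},0), (0,−e_{ij}) : i<j} ∪ {½(e_{ii}−e_{nn}, e_{nn}−e_{ii}) : i ≤ n−1} form a hyperbolic basis: the first set spans a totally isotropic free summand H₀, the second set spans a complementary totally isotropic summand, and the pairing between corresponding listed basis elements is the Kronecker delta. -/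
set_option maxHeartbeats 1000000

section Helpers
variable {R : Type*} [CommRing R] {m : Type*} [Fintype m] [DecidableEq m]

lemma tr_mul_std (A : Matrix m m R) (i j : m) :
    (A * Matrix.single i j (1:R)).trace = A j i := by
  classical
  rw [Matrix.trace]
  rw [Finset.sum_eq_single j]
  · simp [Matrix.diag]
  · intro b _ hb
    exact Matrix.mul_single_apply_of_ne 1 i j b b hb A
  · simp

lemma tr_std_mul (A : Matrix m m R) (i j : m) :
    (Matrix.single i j (1:R) * A).trace = A j i := by
  rw [Matrix.trace_mul_comm, tr_mul_std]

lemma tr_std_std (a b c d : m) :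
    (Matrix.single a b (1:R) * Matrix.single c d 1).trace
      = if b = c ∧ d = a then 1 else 0 := by
  classical
  by_cases h : b = c
  · subst h
    rw [Matrix.single_mul_single_same, one_mul]
    by_cases h2 : d = a
    · subst h2; simp [Matrix.trace_single_eq_same]
    · rw [Matrix.trace_single_eq_of_ne _ _ _ (Ne.symm h2)]; simp [h2]
  · rw [Matrix.single_mul_single_of_ne (h := h)]; simp [h]

lemma one_eq_sum_diag : (1 : Matrix m m R) = ∑ i : m, Matrix.single i i (1:R) := by
  classical
  ext p q
  rw [Matrix.sum_apply]
  rw [Finset.sum_eq_single p]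
  · by_cases h : p = q <;> simp [Matrix.one_apply, h]
  · intro b _ hb
    exact Matrix.single_apply_of_row_ne hb _ _ _
  · simp

lemma matrix_decomp (A : Matrix m m R) (d : m) :
    (∑ p : m, ∑ q : m, A p q •
        (Matrix.single p q (1:R) - if p = q then Matrix.single d d 1 else 0))
      = A - A.trace • Matrix.single d d 1 := by
  classical
  have h1 : ∀ p q : m, A p q •
      (Matrix.single p q (1:R) - if p = q then Matrix.single d d 1 else 0)
      = Matrix.single p q (A p q)
        - (if p = q then A p q • Matrix.single d d (1:R) else 0) := by
    intro p q
    rw [smul_sub]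
    congr 1
    · rw [Matrix.smul_single, smul_eq_mul, mul_one]
    · split_ifs <;> simp
  simp only [h1, Finset.sum_sub_distrib]
  congr 1
  · exact (Matrix.matrix_eq_sum_single A).symm
  · have h2 : ∀ p : m, (∑ q : m, if p = q then A p q • Matrix.single d d (1:R) else 0)
        = A p p • Matrix.single d d (1:R) := by
      intro p
      rw [Finset.sum_ite_eq Finset.univ p (fun q => A p q • Matrix.single d d (1:R))]
      simp
    simp only [h2]
    rw [← Finset.sum_smul]
    rfl

end Helpers



/-!
STATEMENT 15.  `R = ℂ[x_{ij}]`, `Mat` the `n×n` matrices over `R`.  `T` is the module of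
pairs `(A,B)` with `tr A = tr B`; `B₂ = T / span{(I,I)}`.  The symmetric bilinear form is
`⟨(A,B),(C,D)⟩ = tr(AC − BD)`.  Claims: the form descends to the quotient (it vanishes
against `(I,I)` on `T`); it is nondegenerate on `B₂` (an element of `T` pairing to zero
with all of `T` lies in `span{(I,I)}`); and the listed `2(n²−1)` elements (indexed by
`ι = {i<j} ⊕ {i<j} ⊕ Fin (n−1)`) form a hyperbolic basis of `B₂`: each family spans a
totally isotropic summand, corresponding elements pair by the Kronecker delta, and
together with `(I,I)` they form a basis of `T`.
-/
/-- The polynomial ring `ℂ[x_{ij} : 1 ≤ i,j ≤ n]` on the entries of a generic `n×n`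
matrix. -/
abbrev PolyRing (n : ℕ) : Type := MvPolynomial (Fin n × Fin n) ℂ

theorem stmt15 (n : ℕ) (hn : 1 ≤ n)
    (T : Submodule (PolyRing n) (Matrix (Fin n) (Fin n) (PolyRing n) × Matrix (Fin n) (Fin n) (PolyRing n)))
    (hT : ∀ x : Matrix (Fin n) (Fin n) (PolyRing n) × Matrix (Fin n) (Fin n) (PolyRing n),
      x ∈ T ↔ x.1.trace = x.2.trace)
    (form : (Matrix (Fin n) (Fin n) (PolyRing n) × Matrix (Fin n) (Fin n) (PolyRing n)) →
      (Matrix (Fin n) (Fin n) (PolyRing n) × Matrix (Fin n) (Fin n) (PolyRing n)) → (PolyRing n))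
    (hform : ∀ x y, form x y = (x.1 * y.1).trace - (x.2 * y.2).trace)
    -- the two families of elements
    (h h' : ({ij : Fin n × Fin n // ij.1 < ij.2} ⊕ {ij : Fin n × Fin n // ij.1 < ij.2}
        ⊕ Fin (n-1)) → Matrix (Fin n) (Fin n) (PolyRing n) × Matrix (Fin n) (Fin n) (PolyRing n))
    (hh₁ : ∀ ij, h (Sum.inl ij) = (Matrix.single ij.1.1 ij.1.2 1, 0))
    (hh₂ : ∀ ij, h (Sum.inr (Sum.inl ij)) = (0, Matrix.single ij.1.2 ij.1.1 1))
    (hh₃ : ∀ k : Fin (n-1), h (Sum.inr (Sum.inr k)) =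
      (Matrix.single (⟨k.1, by omega⟩ : Fin n) (⟨k.1, by omega⟩ : Fin n) 1,
       Matrix.single (⟨k.1, by omega⟩ : Fin n) (⟨k.1, by omega⟩ : Fin n) 1))
    (hh'₁ : ∀ ij, h' (Sum.inl ij) = (Matrix.single ij.1.2 ij.1.1 1, 0))
    (hh'₂ : ∀ ij, h' (Sum.inr (Sum.inl ij)) = (0, -Matrix.single ij.1.1 ij.1.2 1))
    (hh'₃ : ∀ k : Fin (n-1), h' (Sum.inr (Sum.inr k)) =
      (((MvPolynomial.C (1/2 : ℂ) : PolyRing n)) •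
        (Matrix.single (⟨k.1, by omega⟩ : Fin n) (⟨k.1, by omega⟩ : Fin n) (1 : PolyRing n)
          - Matrix.single (⟨n-1, by omega⟩ : Fin n) (⟨n-1, by omega⟩ : Fin n) 1),
       ((MvPolynomial.C (1/2 : ℂ) : PolyRing n)) •
        (Matrix.single (⟨n-1, by omega⟩ : Fin n) (⟨n-1, by omega⟩ : Fin n) (1 : PolyRing n)
          - Matrix.single (⟨k.1, by omega⟩ : Fin n) (⟨k.1, by omega⟩ : Fin n) 1))) :
    -- all listed elements and (I,I) lie in T
    (((1 : Matrix (Fin n) (Fin n) (PolyRing n)), (1 : Matrix (Fin n) (Fin n) (PolyRing n))) ∈ T ∧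
      (∀ i, h i ∈ T) ∧ (∀ i, h' i ∈ T)) ∧
    -- the form is well-defined modulo (I,I)
    (∀ x ∈ T, form x (1, 1) = 0 ∧ form (1, 1) x = 0) ∧
    -- the form is nondegenerate on B₂ = T / span{(I,I)}
    (∀ x ∈ T, (∀ y ∈ T, form x y = 0) →
      x ∈ Submodule.span (PolyRing n) {((1 : Matrix (Fin n) (Fin n) (PolyRing n)), (1 : Matrix (Fin n) (Fin n) (PolyRing n)))}) ∧
    -- hyperbolic basis: isotropy and Kronecker-delta pairing …
    (∀ i j, form (h i) (h j) = 0 ∧ form (h' i) (h' j) = 0 ∧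
      form (h i) (h' j) = if i = j then 1 else 0) ∧
    -- … and, together with (I,I), the listed elements form a basis of T
    LinearIndependent (PolyRing n) (Sum.elim h (Sum.elim h'
      (fun _ : Unit => ((1 : Matrix (Fin n) (Fin n) (PolyRing n)), (1 : Matrix (Fin n) (Fin n) (PolyRing n)))))) ∧
    Submodule.span (PolyRing n) (Set.range (Sum.elim h (Sum.elim h'
      (fun _ : Unit => ((1 : Matrix (Fin n) (Fin n) (PolyRing n)), (1 : Matrix (Fin n) (Fin n) (PolyRing n))))))) = T := by
  classical
  have hd : n - 1 < n := by omega
  set d : Fin n := ⟨n-1, hd⟩ with hddef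
  have hhalf : (MvPolynomial.C (1/2 : ℂ) : PolyRing n) * 2 = 1 := by
    have h2 : (2 : PolyRing n) = MvPolynomial.C (2 : ℂ) := by
      rw [map_ofNat]
    rw [h2, ← map_mul, ← map_one (MvPolynomial.C : ℂ →+* PolyRing n)]
    norm_num
  -- memberships
  have memT : ∀ x : Matrix (Fin n) (Fin n) (PolyRing n) × Matrix (Fin n) (Fin n) (PolyRing n), x.1.trace = x.2.trace → x ∈ T := fun x hx => (hT x).2 hx
  have h1T : (((1 : Matrix (Fin n) (Fin n) (PolyRing n)), (1 : Matrix (Fin n) (Fin n) (PolyRing n))) : Matrix (Fin n) (Fin n) (PolyRing n) × Matrix (Fin n) (Fin n) (PolyRing n)) ∈ T := memT _ rfl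
  have hhT : ∀ i, h i ∈ T := by
    rintro (ij | ij | k)
    · rw [hh₁]; exact memT _ (by
        simp [Matrix.trace_single_eq_of_ne _ _ _ (ne_of_gt ij.2).symm])
    · rw [hh₂]; exact memT _ (by
        simp [Matrix.trace_single_eq_of_ne _ _ _ (ne_of_lt ij.2).symm])
    · rw [hh₃]; exact memT _ rfl
  have hh'T : ∀ i, h' i ∈ T := by
    rintro (ij | ij | k)
    · rw [hh'₁]; exact memT _ (by
        simp [Matrix.trace_single_eq_of_ne _ _ _ (ne_of_lt ij.2).symm])
    · rw [hh'₂]; exact memT _ (by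
        simp [Matrix.trace_single_eq_of_ne _ _ _ (ne_of_gt ij.2).symm])
    · rw [hh'₃]; exact memT _ (by
        simp [Matrix.trace_smul, Matrix.trace_sub, Matrix.trace_single_eq_same])
  -- well-definedness
  have welldef : ∀ x ∈ T, form x ((1 : Matrix (Fin n) (Fin n) (PolyRing n)), (1 : Matrix (Fin n) (Fin n) (PolyRing n))) = 0 ∧ form ((1 : Matrix (Fin n) (Fin n) (PolyRing n)),(1 : Matrix (Fin n) (Fin n) (PolyRing n))) x = 0 := by
    intro x hx
    have htr := (hT x).1 hx
    constructor
    · rw [hform]; simp [htr]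
    · rw [hform]; simp [htr]
  -- nondegeneracy
  have nondeg : ∀ x ∈ T, (∀ y ∈ T, form x y = 0) →
      x ∈ Submodule.span (PolyRing n) {(((1 : Matrix (Fin n) (Fin n) (PolyRing n)), (1 : Matrix (Fin n) (Fin n) (PolyRing n))) : Matrix (Fin n) (Fin n) (PolyRing n) × Matrix (Fin n) (Fin n) (PolyRing n))} := by
    intro x hx hxy
    have offdiag1 : ∀ i j : Fin n, i ≠ j → x.1 i j = 0 := by
      intro i j hij
      have hyT : ((Matrix.single j i (1 : PolyRing n), 0) : Matrix (Fin n) (Fin n) (PolyRing n) × Matrix (Fin n) (Fin n) (PolyRing n)) ∈ T := memT _ (by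
        simp [Matrix.trace_single_eq_of_ne _ _ _ hij.symm])
      have := hxy _ hyT
      rw [hform] at this
      simpa [tr_mul_std] using this
    have offdiag2 : ∀ i j : Fin n, i ≠ j → x.2 i j = 0 := by
      intro i j hij
      have hyT : (((0 : Matrix (Fin n) (Fin n) (PolyRing n)), Matrix.single j i (1 : PolyRing n)) : Matrix (Fin n) (Fin n) (PolyRing n) × Matrix (Fin n) (Fin n) (PolyRing n)) ∈ T := memT _ (by
        simp [Matrix.trace_single_eq_of_ne _ _ _ hij.symm])
      have := hxy _ hyT
      rw [hform] at this
      have h0 : -(x.2 * Matrix.single j i (1 : PolyRing n)).trace = 0 := by simpa using this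
      rw [tr_mul_std] at h0
      exact neg_eq_zero.mp h0
    have diag : ∀ i j : Fin n, x.1 i i = x.2 j j := by
      intro i j
      have hyT : ((Matrix.single i i (1 : PolyRing n), Matrix.single j j (1 : PolyRing n)) : Matrix (Fin n) (Fin n) (PolyRing n) × Matrix (Fin n) (Fin n) (PolyRing n)) ∈ T :=
        memT _ (by simp [Matrix.trace_single_eq_same])
      have := hxy _ hyT
      rw [hform] at this
      rw [tr_mul_std, tr_mul_std] at this
      exact sub_eq_zero.mp this
    set z : Fin n := ⟨0, by omega⟩ with hz
    have hx1 : x = (x.1 z z) • (((1 : Matrix (Fin n) (Fin n) (PolyRing n)), (1 : Matrix (Fin n) (Fin n) (PolyRing n))) : Matrix (Fin n) (Fin n) (PolyRing n) × Matrix (Fin n) (Fin n) (PolyRing n)) := by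
      have e1 : x.1 = x.1 z z • (1 : Matrix (Fin n) (Fin n) (PolyRing n)) := by
        ext p q
        by_cases hpq : p = q
        · subst hpq
          simp [Matrix.one_apply, (diag p z).trans (diag z z).symm]
        · simp [Matrix.one_apply, hpq, offdiag1 p q hpq]
      have e2 : x.2 = x.1 z z • (1 : Matrix (Fin n) (Fin n) (PolyRing n)) := by
        ext p q
        by_cases hpq : p = q
        · subst hpq
          simp [Matrix.one_apply, (diag z p).symm]
        · simp [Matrix.one_apply, hpq, offdiag2 p q hpq]
      exact Prod.ext (by simpa using e1) (by simpa using e2)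
    rw [hx1]
    exact Submodule.smul_mem _ _ (Submodule.mem_span_singleton_self _)
  -- pairings
  have pairings : ∀ i j, form (h i) (h j) = 0 ∧ form (h' i) (h' j) = 0 ∧
      form (h i) (h' j) = if i = j then 1 else 0 := by
    rintro (⟨⟨a,b⟩,hab⟩ | ⟨⟨a,b⟩,hab⟩ | ⟨k,hk⟩) (⟨⟨c,e⟩,hce⟩ | ⟨⟨c,e⟩,hce⟩ | ⟨m,hm⟩) <;>
      refine ⟨?_, ?_, ?_⟩ <;>
      simp only [hform, hh₁, hh₂, hh₃, hh'₁, hh'₂, hh'₃, Matrix.mul_smul, Matrix.smul_mul,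
        Matrix.mul_sub, Matrix.sub_mul, Matrix.mul_zero, Matrix.zero_mul, Matrix.mul_neg,
        Matrix.neg_mul, Matrix.trace_smul, Matrix.trace_sub, Matrix.trace_neg, Matrix.trace_zero,
        tr_std_std, smul_eq_mul, Sum.inl.injEq, Sum.inr.injEq, Subtype.mk.injEq, Prod.mk.injEq,
        Fin.mk.injEq, Fin.ext_iff, Fin.lt_def, sub_zero, zero_sub, neg_neg, mul_zero, sub_self,
        neg_zero, mul_one] <;>
      split_ifs <;>
      first
        | rfl
        | ring1
        | linear_combination hhalf
        | linear_combination -hhalf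
        | exact (‹False›).elim
        | (exfalso
           try replace hab : (a:ℕ) < (b:ℕ) := hab
           try replace hce : (c:ℕ) < (e:ℕ) := hce
           have hdv : (d : ℕ) = n - 1 := rfl
           omega)
  -- symmetry of the form
  have symm : ∀ x y, form x y = form y x := by
    intro x y
    rw [hform, hform, Matrix.trace_mul_comm x.1 y.1, Matrix.trace_mul_comm x.2 y.2]
  -- the form as a linear map in the first variable
  let Φ : (Matrix (Fin n) (Fin n) (PolyRing n) × Matrix (Fin n) (Fin n) (PolyRing n)) →
      (Matrix (Fin n) (Fin n) (PolyRing n) × Matrix (Fin n) (Fin n) (PolyRing n)) →ₗ[PolyRing n] PolyRing n :=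
    fun y => {
      toFun := fun x => (x.1 * y.1).trace - (x.2 * y.2).trace
      map_add' := by
        intro a b
        simp only [Prod.fst_add, Prod.snd_add, Matrix.add_mul, Matrix.trace_add]
        ring
      map_smul' := by
        intro r a
        simp only [Prod.smul_fst, Prod.smul_snd, Matrix.smul_mul, Matrix.trace_smul,
          smul_eq_mul, RingHom.id_apply]
        ring }
  have Φform : ∀ x y, Φ y x = form x y := by
    intro x y; rw [hform]; rfl
  -- the evaluation functional at (d,d)
  let φ : (Matrix (Fin n) (Fin n) (PolyRing n) × Matrix (Fin n) (Fin n) (PolyRing n)) →ₗ[PolyRing n] PolyRing n := {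
    toFun := fun x => x.1 d d + x.2 d d
    map_add' := by intro a b; simp [Matrix.add_apply]; ring
    map_smul' := by intro r a; simp [Matrix.smul_apply, smul_eq_mul]; ring }
  set bigv := Sum.elim h (Sum.elim h'
      (fun _ : Unit => ((1 : Matrix (Fin n) (Fin n) (PolyRing n)), (1 : Matrix (Fin n) (Fin n) (PolyRing n)))))
    with hbigv
  -- linear independence
  have indep : LinearIndependent (PolyRing n) bigv := by
    rw [linearIndependent_iff]
    intro l hl
    have extract : ∀ (ψ : (Matrix (Fin n) (Fin n) (PolyRing n) × Matrix (Fin n) (Fin n) (PolyRing n)) →ₗ[PolyRing n] PolyRing n)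
        (a : PolyRing n) i₀, a ≠ 0 → (∀ i, ψ (bigv i) = if i = i₀ then a else 0) → l i₀ = 0 := by
      intro ψ a i₀ ha hval
      have h0 := congrArg ψ hl
      rw [map_zero, Finsupp.apply_linearCombination, Finsupp.linearCombination_apply] at h0
      rw [Finsupp.sum] at h0
      by_cases hmem : i₀ ∈ l.support
      · rw [Finset.sum_eq_single i₀ (fun b _ hb => by
            rw [Function.comp_apply, hval b, if_neg hb, smul_zero])
            (fun hni => absurd hmem hni)] at h0
        rw [Function.comp_apply, hval i₀, if_pos rfl, smul_eq_mul] at h0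
        exact (mul_eq_zero.mp h0).resolve_right ha
      · exact Finsupp.notMem_support_iff.mp hmem
    refine Finsupp.ext fun i => ?_
    rw [Finsupp.coe_zero, Pi.zero_apply]
    rcases i with j | j | ⟨⟩
    · refine extract (Φ (h' j)) 1 (Sum.inl j) one_ne_zero ?_
      rintro (i | i | ⟨⟩)
      · rw [show bigv (Sum.inl i) = h i from rfl, Φform, (pairings i j).2.2]
        simp
      · rw [show bigv (Sum.inr (Sum.inl i)) = h' i from rfl, Φform, (pairings i j).2.1]
        simp
      · rw [show bigv (Sum.inr (Sum.inr ())) = ((1 : Matrix (Fin n) (Fin n) (PolyRing n)), (1 : Matrix (Fin n) (Fin n) (PolyRing n))) from rfl,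
          Φform, (welldef _ (hh'T j)).2]
        simp
    · refine extract (Φ (h j)) 1 (Sum.inr (Sum.inl j)) one_ne_zero ?_
      rintro (i | i | ⟨⟩)
      · rw [show bigv (Sum.inl i) = h i from rfl, Φform, (pairings i j).1]
        simp
      · rw [show bigv (Sum.inr (Sum.inl i)) = h' i from rfl, Φform, symm, (pairings j i).2.2]
        simp only [Sum.inr.injEq, Sum.inl.injEq]
        by_cases hji : j = i
        · subst hji; simp
        · rw [if_neg hji, if_neg (fun hh => hji hh.symm)]
      · rw [show bigv (Sum.inr (Sum.inr ())) = ((1 : Matrix (Fin n) (Fin n) (PolyRing n)), (1 : Matrix (Fin n) (Fin n) (PolyRing n))) from rfl,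
          Φform, (welldef _ (hhT j)).2]
        simp
    · refine extract φ 2 (Sum.inr (Sum.inr ())) two_ne_zero ?_
      rintro ((⟨⟨a,b⟩,hab⟩ | ⟨⟨a,b⟩,hab⟩ | ⟨k,hk⟩) | (⟨⟨a,b⟩,hab⟩ | ⟨⟨a,b⟩,hab⟩ | ⟨k,hk⟩) | ⟨⟩) <;>
        simp only [hbigv, Sum.elim_inl, Sum.elim_inr, hh₁, hh₂, hh₃, hh'₁, hh'₂, hh'₃] <;>
        simp only [φ, LinearMap.coe_mk, AddHom.coe_mk, Matrix.smul_apply, Matrix.sub_apply,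
          Matrix.neg_apply, Matrix.zero_apply, Matrix.one_apply_eq, smul_eq_mul]
      · rw [Matrix.single_apply_of_ne a b 1 d d
          (fun hc => (ne_of_lt hab) (hc.1.trans hc.2.symm))]
        simp
      · rw [Matrix.single_apply_of_ne b a 1 d d
          (fun hc => (ne_of_lt hab) (hc.2.trans hc.1.symm))]
        simp
      · have hne : (⟨k, by omega⟩ : Fin n) ≠ d := by
          simp only [hddef, ne_eq, Fin.mk.injEq]; omega
        rw [Matrix.single_apply_of_row_ne hne]
        simp
      · rw [Matrix.single_apply_of_ne b a 1 d d
          (fun hc => (ne_of_lt hab) (hc.2.trans hc.1.symm))]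
        simp
      · rw [Matrix.single_apply_of_ne a b 1 d d
          (fun hc => (ne_of_lt hab) (hc.1.trans hc.2.symm))]
        simp
      · have hne : (⟨k, by omega⟩ : Fin n) ≠ d := by
          simp only [hddef, ne_eq, Fin.mk.injEq]; omega
        rw [Matrix.single_apply_of_row_ne hne,
          Matrix.single_apply_same]
        simp
        try ring1
      · norm_num
  -- spanning
  have two_half : ∀ A : Matrix (Fin n) (Fin n) (PolyRing n),
      (2 : PolyRing n) • ((MvPolynomial.C (1/2 : ℂ) : PolyRing n) • A) = A := by
    intro A
    rw [smul_smul, mul_comm, hhalf, one_smul]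
  set M := Submodule.span (PolyRing n) (Set.range bigv) with hM
  have mem_v : ∀ i, bigv i ∈ M := fun i => Submodule.subset_span ⟨i, rfl⟩
  have m_one : (((1 : Matrix (Fin n) (Fin n) (PolyRing n)), (1 : Matrix (Fin n) (Fin n) (PolyRing n)))
      : Matrix (Fin n) (Fin n) (PolyRing n) × Matrix (Fin n) (Fin n) (PolyRing n)) ∈ M :=
    mem_v (Sum.inr (Sum.inr ()))
  have m_h : ∀ i, h i ∈ M := fun i => mem_v (Sum.inl i)
  have m_h' : ∀ i, h' i ∈ M := fun i => mem_v (Sum.inr (Sum.inl i))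
  have half_mem : ∀ z : Matrix (Fin n) (Fin n) (PolyRing n) × Matrix (Fin n) (Fin n) (PolyRing n),
      (2 : PolyRing n) • z ∈ M → z ∈ M := by
    intro z hz
    have hzeq : z = (MvPolynomial.C (1/2 : ℂ) : PolyRing n) • ((2 : PolyRing n) • z) := by
      rw [smul_smul, hhalf, one_smul]
    rw [hzeq]
    exact Submodule.smul_mem _ _ hz
  have hEdd : ((Matrix.single d d (1 : PolyRing n), Matrix.single d d (1 : PolyRing n))
      : Matrix (Fin n) (Fin n) (PolyRing n) × Matrix (Fin n) (Fin n) (PolyRing n)) ∈ M := by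
    have h2 : (((1 : Matrix (Fin n) (Fin n) (PolyRing n)), (1 : Matrix (Fin n) (Fin n) (PolyRing n)))
        : Matrix (Fin n) (Fin n) (PolyRing n) × Matrix (Fin n) (Fin n) (PolyRing n))
        = ∑ i : Fin n, (Matrix.single i i (1 : PolyRing n), Matrix.single i i (1 : PolyRing n)) := by
      refine Prod.ext ?_ ?_
      · rw [Prod.fst_sum]; exact one_eq_sum_diag
      · rw [Prod.snd_sum]; exact one_eq_sum_diag
    have h1 : (∑ i ∈ Finset.univ.erase d,
          ((Matrix.single i i (1 : PolyRing n), Matrix.single i i (1 : PolyRing n))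
          : Matrix (Fin n) (Fin n) (PolyRing n) × Matrix (Fin n) (Fin n) (PolyRing n)))
          + (Matrix.single d d (1 : PolyRing n), Matrix.single d d (1 : PolyRing n))
        = ∑ i : Fin n, (Matrix.single i i (1 : PolyRing n), Matrix.single i i (1 : PolyRing n)) :=
      Finset.sum_erase_add _ _ (Finset.mem_univ d)
    have e1 : ((Matrix.single d d (1 : PolyRing n), Matrix.single d d (1 : PolyRing n))
        : Matrix (Fin n) (Fin n) (PolyRing n) × Matrix (Fin n) (Fin n) (PolyRing n))
        = (((1 : Matrix (Fin n) (Fin n) (PolyRing n)), (1 : Matrix (Fin n) (Fin n) (PolyRing n))))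
          - ∑ i ∈ Finset.univ.erase d,
            (Matrix.single i i (1 : PolyRing n), Matrix.single i i (1 : PolyRing n)) := by
      rw [h2, ← h1, add_sub_cancel_left]
    rw [e1]
    refine sub_mem m_one (Submodule.sum_mem _ ?_)
    intro i hi
    have hine : i ≠ d := (Finset.mem_erase.mp hi).1
    have hilt : (i : ℕ) < n - 1 := by
      have h3 := i.isLt
      have h4 : (i : ℕ) ≠ n - 1 := fun hh => hine (Fin.ext (by simp [hh, hddef]))
      omega
    have hm := m_h (Sum.inr (Sum.inr ⟨i.1, hilt⟩))
    rw [hh₃] at hm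
    exact hm
  have hP : ∀ p q : Fin n,
      ((Matrix.single p q (1 : PolyRing n)
          - (if p = q then Matrix.single d d (1 : PolyRing n) else 0),
        (0 : Matrix (Fin n) (Fin n) (PolyRing n)))
        : Matrix (Fin n) (Fin n) (PolyRing n) × Matrix (Fin n) (Fin n) (PolyRing n)) ∈ M := by
    intro p q
    rcases lt_trichotomy p q with hpq | rfl | hqp
    · rw [if_neg (ne_of_lt hpq), sub_zero]
      have hm := m_h (Sum.inl ⟨(p, q), hpq⟩)
      rw [hh₁] at hm
      exact hm
    · rw [if_pos rfl]
      by_cases hpd : p = d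
      · subst hpd
        rw [sub_self]
        exact Submodule.zero_mem M
      · have hplt : (p : ℕ) < n - 1 := by
          have h3 := p.isLt
          have h4 : (p : ℕ) ≠ n - 1 := fun hh => hpd (Fin.ext (by simp [hh, hddef]))
          omega
        apply half_mem
        have hu := m_h (Sum.inr (Sum.inr ⟨p.1, hplt⟩))
        rw [hh₃] at hu
        have hw := m_h' (Sum.inr (Sum.inr ⟨p.1, hplt⟩))
        rw [hh'₃] at hw
        have heq : (2 : PolyRing n) • ((Matrix.single p p (1 : PolyRing n)
              - Matrix.single d d (1 : PolyRing n), (0 : Matrix (Fin n) (Fin n) (PolyRing n)))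
            : Matrix (Fin n) (Fin n) (PolyRing n) × Matrix (Fin n) (Fin n) (PolyRing n))
            = ((Matrix.single p p (1 : PolyRing n), Matrix.single p p (1 : PolyRing n))
              - (Matrix.single d d (1 : PolyRing n), Matrix.single d d (1 : PolyRing n)))
            + (2 : PolyRing n) • ((MvPolynomial.C (1/2 : ℂ) : PolyRing n) •
                (Matrix.single p p (1 : PolyRing n) - Matrix.single d d 1),
              (MvPolynomial.C (1/2 : ℂ) : PolyRing n) •
                (Matrix.single d d (1 : PolyRing n) - Matrix.single p p 1)) := by
          refine Prod.ext ?_ ?_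
          · simp only [Prod.smul_fst, Prod.fst_add, Prod.fst_sub]
            rw [two_half, two_smul]
          · simp only [Prod.smul_snd, Prod.snd_add, Prod.snd_sub]
            rw [two_half, smul_zero]
            abel
        rw [heq]
        exact add_mem (sub_mem hu hEdd) (Submodule.smul_mem _ _ hw)
    · rw [if_neg (ne_of_gt hqp), sub_zero]
      have hm := m_h' (Sum.inl ⟨(q, p), hqp⟩)
      rw [hh'₁] at hm
      exact hm
  have hQ : ∀ p q : Fin n,
      (((0 : Matrix (Fin n) (Fin n) (PolyRing n)),
        Matrix.single p q (1 : PolyRing n)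
          - (if p = q then Matrix.single d d (1 : PolyRing n) else 0))
        : Matrix (Fin n) (Fin n) (PolyRing n) × Matrix (Fin n) (Fin n) (PolyRing n)) ∈ M := by
    intro p q
    rcases lt_trichotomy p q with hpq | rfl | hqp
    · rw [if_neg (ne_of_lt hpq), sub_zero]
      have hm := m_h' (Sum.inr (Sum.inl ⟨(p, q), hpq⟩))
      rw [hh'₂] at hm
      have := Submodule.neg_mem M hm
      simpa using this
    · rw [if_pos rfl]
      by_cases hpd : p = d
      · subst hpd
        rw [sub_self]
        exact Submodule.zero_mem M
      · have hplt : (p : ℕ) < n - 1 := by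
          have h3 := p.isLt
          have h4 : (p : ℕ) ≠ n - 1 := fun hh => hpd (Fin.ext (by simp [hh, hddef]))
          omega
        apply half_mem
        have hu := m_h (Sum.inr (Sum.inr ⟨p.1, hplt⟩))
        rw [hh₃] at hu
        have hw := m_h' (Sum.inr (Sum.inr ⟨p.1, hplt⟩))
        rw [hh'₃] at hw
        have heq : (2 : PolyRing n) • (((0 : Matrix (Fin n) (Fin n) (PolyRing n)),
              Matrix.single p p (1 : PolyRing n) - Matrix.single d d (1 : PolyRing n))
            : Matrix (Fin n) (Fin n) (PolyRing n) × Matrix (Fin n) (Fin n) (PolyRing n))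
            = ((Matrix.single p p (1 : PolyRing n), Matrix.single p p (1 : PolyRing n))
              - (Matrix.single d d (1 : PolyRing n), Matrix.single d d (1 : PolyRing n)))
            - (2 : PolyRing n) • ((MvPolynomial.C (1/2 : ℂ) : PolyRing n) •
                (Matrix.single p p (1 : PolyRing n) - Matrix.single d d 1),
              (MvPolynomial.C (1/2 : ℂ) : PolyRing n) •
                (Matrix.single d d (1 : PolyRing n) - Matrix.single p p 1)) := by
          refine Prod.ext ?_ ?_
          · simp only [Prod.smul_fst, Prod.fst_sub]
            rw [two_half, smul_zero]
            abel
          · simp only [Prod.smul_snd, Prod.snd_sub]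
            rw [two_half, two_smul]
            abel
        rw [heq]
        exact sub_mem (sub_mem hu hEdd) (Submodule.smul_mem _ _ hw)
    · rw [if_neg (ne_of_gt hqp), sub_zero]
      have hm := m_h (Sum.inr (Sum.inl ⟨(q, p), hqp⟩))
      rw [hh₂] at hm
      exact hm
  have spanT : M = T := by
    refine le_antisymm (Submodule.span_le.mpr ?_) ?_
    · rintro y ⟨i, rfl⟩
      rcases i with j | j | u
      · exact hhT j
      · exact hh'T j
      · exact h1T
    · intro x hx
      have htr' : x.1.trace = x.2.trace := (hT x).1 hx
      have decomp : x = (∑ p : Fin n, ∑ q : Fin n, x.1 p q •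
            ((Matrix.single p q (1 : PolyRing n)
                - (if p = q then Matrix.single d d (1 : PolyRing n) else 0),
              (0 : Matrix (Fin n) (Fin n) (PolyRing n)))
              : Matrix (Fin n) (Fin n) (PolyRing n) × Matrix (Fin n) (Fin n) (PolyRing n)))
          + (∑ p : Fin n, ∑ q : Fin n, x.2 p q •
            (((0 : Matrix (Fin n) (Fin n) (PolyRing n)),
              Matrix.single p q (1 : PolyRing n)
                - (if p = q then Matrix.single d d (1 : PolyRing n) else 0))
              : Matrix (Fin n) (Fin n) (PolyRing n) × Matrix (Fin n) (Fin n) (PolyRing n)))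
          + x.1.trace • ((Matrix.single d d (1 : PolyRing n), Matrix.single d d (1 : PolyRing n))
              : Matrix (Fin n) (Fin n) (PolyRing n) × Matrix (Fin n) (Fin n) (PolyRing n)) := by
        refine Prod.ext ?_ ?_
        · simp only [Prod.fst_add, Prod.fst_sum, Prod.smul_fst, smul_zero,
            Finset.sum_const_zero, add_zero]
          rw [matrix_decomp x.1 d]
          abel
        · simp only [Prod.snd_add, Prod.snd_sum, Prod.smul_snd, smul_zero,
            Finset.sum_const_zero, zero_add]
          rw [matrix_decomp x.2 d, htr']
          abel
      rw [decomp]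
      refine add_mem (add_mem ?_ ?_) (Submodule.smul_mem _ _ hEdd)
      · exact Submodule.sum_mem _ fun p _ => Submodule.sum_mem _ fun q _ =>
          Submodule.smul_mem _ _ (hP p q)
      · exact Submodule.sum_mem _ fun p _ => Submodule.sum_mem _ fun q _ =>
          Submodule.smul_mem _ _ (hQ p q)
  exact ⟨⟨h1T, hhT, hh'T⟩, welldef, nondeg, pairings, indep, spanT⟩
end

section
/- Let R = ℂ[x_{ij} : 1 ≤ i,j ≤ n] and X = (x_{ij}) the generic n×n matrix. Define the Gulliksen–Negård complex B: 0 → R →^{δ₄} B₃ →^{δ₃} B₂ →^{δ₂} B₁ →^{δ₁} R, where B₁, B₃ are the modules of n×n matrices, B₂ is as in the previous context, δ₁(A) = tr(A·adj(X)), δ₂(A,B) = AX − XB, δ₃(A) = (XA, AX), δ₄(1) = adj(X). Then B is a complex: δ₁δ₂ = 0, δ₂δ₃ = 0, and δ₃δ₄ = 0. -/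
noncomputable def genMatrix (n : ℕ) : Matrix (Fin n) (Fin n) (PolyRing n) :=
  Matrix.of fun i j => MvPolynomial.X (i, j)

namespace Matrix

variable {m R : Type*} [Fintype m] [DecidableEq m] [CommRing R]

theorem trace_mul_sub_mul_mul_adjugate (A B X : Matrix m m R) :
    ((A * X - X * B) * X.adjugate).trace = X.det * (A.trace - B.trace) := by
  calc ((A * X - X * B) * X.adjugate).trace
      = (A * (X * X.adjugate)).trace - (B * (X.adjugate * X)).trace := by
        rw [sub_mul, trace_sub, Matrix.mul_assoc, Matrix.mul_assoc,
          trace_mul_comm X, Matrix.mul_assoc]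
    _ = X.det * (A.trace - B.trace) := by
        rw [mul_adjugate, adjugate_mul, Matrix.mul_smul, Matrix.mul_smul, trace_smul, trace_smul,
          Matrix.mul_one, Matrix.mul_one, smul_eq_mul, smul_eq_mul, mul_sub]

theorem mul_adjugate_prod_adjugate_mul (X : Matrix m m R) :
    (X * X.adjugate, X.adjugate * X) = X.det • ((1 : Matrix m m R), (1 : Matrix m m R)) := by
  rw [mul_adjugate, adjugate_mul, Prod.smul_mk]

end Matrix

theorem stmt16 (n : ℕ) :
    -- δ₃ lands in B₂
    (∀ A : Matrix (Fin n) (Fin n) (PolyRing n),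
      ((genMatrix n * A).trace = (A * genMatrix n).trace)) ∧
    -- δ₂ is well defined on B₂ : δ₂(I,I) = 0
    ((1 : Matrix (Fin n) (Fin n) (PolyRing n)) * genMatrix n
        - genMatrix n * (1 : Matrix (Fin n) (Fin n) (PolyRing n)) = 0) ∧
    -- δ₁ ∘ δ₂ = 0 (on B₂, i.e. for pairs with equal traces)
    (∀ A B : Matrix (Fin n) (Fin n) (PolyRing n), A.trace = B.trace →
      ((A * genMatrix n - genMatrix n * B) * (genMatrix n).adjugate).trace = 0) ∧
    -- δ₂ ∘ δ₃ = 0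
    (∀ A : Matrix (Fin n) (Fin n) (PolyRing n),
      (genMatrix n * A) * genMatrix n - genMatrix n * (A * genMatrix n) = 0) ∧
    -- δ₃ ∘ δ₄ = 0 in B₂
    ((genMatrix n * (genMatrix n).adjugate, (genMatrix n).adjugate * genMatrix n) ∈
      Submodule.span (PolyRing n)
        {((1 : Matrix (Fin n) (Fin n) (PolyRing n)),
          (1 : Matrix (Fin n) (Fin n) (PolyRing n)))}) := by
  refine ⟨fun A => Matrix.trace_mul_comm _ _, by rw [Matrix.one_mul, Matrix.mul_one, sub_self],
    fun A B h => ?_, fun A => by rw [Matrix.mul_assoc, sub_self], ?_⟩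
  · rw [Matrix.trace_mul_sub_mul_mul_adjugate, h, sub_self, mul_zero]
  · rw [Matrix.mul_adjugate_prod_adjugate_mul]
    exact Submodule.smul_mem _ _ (Submodule.mem_span_singleton_self _)
end
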